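/- The fiber map ψ_λ has at least one critical point in (0,∞) if and only if λ ≤ Λ(A,B). -/

import Mathlib

/-!
For `t > 0`, `ψ_λ'(t) = 0` exactly when `λ = g(t) := (B t^(γ-2) - aA) / (A² t²)`. Writing
`t = T x` with `T = T(A,B)`, the inequality `g(t) ≤ g(T)` becomes the weighted AM–GM inequality
`x^(γ-2) = (x²)^((γ-2)/2) ≤ ((γ-2)/2) x² + (4-γ)/2`, and `g(T) = Λ(A,B)`. Since `g → -∞` as
`t → 0⁺`, the intermediate value theorem shows that `g` maps `(0,∞)` onto `(-∞, Λ(A,B)]`.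
-/

open Real Set Filter

/-- Fiber map `ψ_λ(t) = (a/2)·A·t² + (λ/4)·A²·t⁴ − (1/γ)·B·t^γ`. -/
noncomputable def psi (a γ A B lam t : ℝ) : ℝ :=
  a / 2 * A * t ^ 2 + lam / 4 * A ^ 2 * t ^ 4 - 1 / γ * B * t ^ γ

/-- The constant `C_{a,γ} = a·((γ−2)/(4−γ))·((4−γ)/(2a))^(2/(γ−2))`. -/
noncomputable def Cag (a γ : ℝ) : ℝ :=
  a * ((γ - 2) / (4 - γ)) * ((4 - γ) / (2 * a)) ^ (2 / (γ - 2))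

/-- The extremal value `Λ(A,B) = C_{a,γ}·B^(2/(γ−2))·A^(−γ/(γ−2))`. -/
noncomputable def Lam (a γ A B : ℝ) : ℝ :=
  Cag a γ * B ^ (2 / (γ - 2)) * A ^ (-(γ / (γ - 2)))

/-- `T(A,B) = (2aA/((4−γ)B))^(1/(γ−2))`. -/
noncomputable def Tab (a γ A B : ℝ) : ℝ :=
  (2 * a * A / ((4 - γ) * B)) ^ (1 / (γ - 2))

open Topology

lemma hasDerivAt_psi (a γ A B lam : ℝ) {t : ℝ} (hγ : γ ≠ 0) (ht : 0 < t) :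
    HasDerivAt (psi a γ A B lam) (a * A * t + lam * A ^ 2 * t ^ 3 - B * t ^ (γ - 1)) t := by
  have hquad := (hasDerivAt_pow 2 t).const_mul (a / 2 * A)
  have hquart := (hasDerivAt_pow 4 t).const_mul (lam / 4 * A ^ 2)
  have hpow := (hasDerivAt_rpow_const (p := γ) (Or.inl ht.ne')).const_mul (1 / γ * B)
  refine ((hquad.add hquart).sub hpow).congr_deriv ?_
  field_simp
  ring

/-- The value of `λ` for which `t` is a critical point of `ψ_λ`. -/
noncomputable def criticalLambda (a γ A B t : ℝ) : ℝ :=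
  (B * t ^ (γ - 2) - a * A) / (A ^ 2 * t ^ 2)

lemma deriv_psi_eq_zero_iff (a γ A B lam : ℝ) {t : ℝ} (hγ : γ ≠ 0) (hA : A ≠ 0) (ht : 0 < t) :
    deriv (psi a γ A B lam) t = 0 ↔ criticalLambda a γ A B t = lam := by
  have hsplit : t ^ (γ - 1) = t ^ (γ - 2) * t := by
    rw [← rpow_add_one ht.ne']
    ring_nf
  rw [(hasDerivAt_psi a γ A B lam hγ ht).deriv, criticalLambda, hsplit,
    div_eq_iff (by positivity)]
  constructor <;> intro h
  · apply mul_left_cancel₀ ht.ne'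
    linear_combination -h
  · linear_combination -t * h

lemma rpow_le_mul_add_one_sub {p x : ℝ} (hp₀ : 0 ≤ p) (hp₁ : p ≤ 1) (hx : 0 ≤ x) :
    x ^ p ≤ p * x + (1 - p) := by
  have := rpow_one_add_le_one_add_mul_self (s := x - 1) (by linarith) hp₀ hp₁
  rw [add_sub_cancel] at this
  linarith

section

variable {a γ A B : ℝ}

lemma Tab_rpow (hγ : γ ≠ 2) (hE : 0 ≤ 2 * a * A / ((4 - γ) * B)) :
    Tab a γ A B ^ (γ - 2) = 2 * a * A / ((4 - γ) * B) := by
  rw [Tab, ← rpow_mul hE, one_div_mul_cancel (sub_ne_zero.2 hγ), rpow_one]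

lemma Tab_pos (ha : 0 < a) (hγ4 : γ < 4) (hA : 0 < A) (hB : 0 < B) : 0 < Tab a γ A B := by
  have h4 : 0 < 4 - γ := by linarith
  exact rpow_pos_of_pos (by positivity) _

lemma criticalLambda_le_criticalLambda_Tab (ha : 0 < a) (hγ2 : 2 < γ) (hγ4 : γ < 4)
    (hA : 0 < A) (hB : 0 < B) {t : ℝ} (ht : 0 < t) :
    criticalLambda a γ A B t ≤ criticalLambda a γ A B (Tab a γ A B) := by
  set T := Tab a γ A B
  have h4 : 0 < 4 - γ := by linarith
  have hE : 0 < 2 * a * A / ((4 - γ) * B) := by positivity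
  have hT : 0 < T := Tab_pos ha hγ4 hA hB
  have hBE : B * T ^ (γ - 2) * (1 - (γ - 2) / 2) = a * A := by
    rw [Tab_rpow hγ2.ne' hE.le]
    field_simp
    ring
  obtain ⟨x, hx, rfl⟩ : ∃ x, 0 < x ∧ t = T * x := ⟨t / T, by positivity, by field_simp⟩
  have hyoung : x ^ (γ - 2) ≤ (γ - 2) / 2 * x ^ 2 + (1 - (γ - 2) / 2) := by
    have := rpow_le_mul_add_one_sub (x := x ^ 2) (p := (γ - 2) / 2) (by linarith) (by linarith)
      (by positivity)
    rwa [← rpow_natCast_mul hx.le, Nat.cast_ofNat, mul_div_cancel₀ _ two_ne_zero] at this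
  simp only [criticalLambda, mul_rpow hT.le hx.le, mul_pow]
  have key : B * T ^ (γ - 2) * x ^ (γ - 2) - a * A ≤ (B * T ^ (γ - 2) - a * A) * x ^ 2 := by
    have := mul_le_mul_of_nonneg_left hyoung (by positivity : 0 ≤ B * T ^ (γ - 2))
    rw [← hBE]
    linear_combination this
  rw [div_le_div_iff₀ (by positivity) (by positivity)]
  linear_combination (A ^ 2 * T ^ 2) * key

lemma criticalLambda_Tab (ha : 0 < a) (hγ2 : 2 < γ) (hγ4 : γ < 4) (hA : 0 < A) (hB : 0 < B) :
    criticalLambda a γ A B (Tab a γ A B) = Lam a γ A B := by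
  set E := 2 * a * A / ((4 - γ) * B)
  set q := 2 / (γ - 2)
  have h4 : 0 < 4 - γ := by linarith
  have hγ2' : γ - 2 ≠ 0 := by linarith
  have hE : 0 < E := by positivity
  have hT2 : Tab a γ A B ^ 2 = E ^ q := by
    rw [Tab, ← rpow_mul_natCast hE.le]
    congr 1
    simp only [q]
    field_simp
    norm_num
  have hLam : Lam a γ A B = a * (γ - 2) / (4 - γ) * A⁻¹ * (E ^ q)⁻¹ := by
    have hEinv : E⁻¹ = (4 - γ) / (2 * a) * B * A⁻¹ := by
      simp only [E]
      field_simp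
    have hexp : -(γ / (γ - 2)) = -1 + -q := by
      simp only [q]
      field_simp
      ring
    rw [Lam, Cag, ← inv_rpow hE.le, hEinv, mul_rpow (by positivity) (by positivity),
      mul_rpow (by positivity) (by positivity), hexp, rpow_add hA, rpow_neg_one, rpow_neg hA.le,
      inv_rpow hA.le]
    ring
  rw [criticalLambda, Tab_rpow hγ2.ne' hE.le, hT2, hLam]
  field_simp
  ring

lemma tendsto_criticalLambda_nhdsGT_zero (ha : 0 < a) (hγ2 : 2 < γ) (hA : 0 < A) :
    Tendsto (criticalLambda a γ A B) (𝓝[>] 0) atBot := by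
  have hsplit : criticalLambda a γ A B = fun t ↦ (B * t ^ (γ - 2) - a * A) / A ^ 2 * (t⁻¹) ^ 2 := by
    funext t
    rw [criticalLambda, inv_pow, ← div_eq_mul_inv, div_div]
  have hcont : ContinuousAt (fun t : ℝ ↦ (B * t ^ (γ - 2) - a * A) / A ^ 2) 0 := by
    fun_prop (disch := first | positivity | exact Or.inr (by linarith))
  have hnum := hcont.tendsto.mono_left (nhdsWithin_le_nhds (s := Ioi 0))
  simp only [zero_rpow (by linarith : γ - 2 ≠ 0), mul_zero, zero_sub] at hnum
  rw [hsplit]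
  exact hnum.neg_mul_atTop (by rw [neg_div, neg_lt_zero]; positivity)
    ((tendsto_pow_atTop two_ne_zero).comp tendsto_inv_nhdsGT_zero)

lemma continuousOn_criticalLambda (hA : A ≠ 0) : ContinuousOn (criticalLambda a γ A B) (Ioi 0) := by
  intro t ht
  have ht : t ≠ 0 := ne_of_gt ht
  apply ContinuousAt.continuousWithinAt
  unfold criticalLambda
  fun_prop (disch := first | positivity | exact Or.inl ht)

lemma criticalLambda_image_Ioi (ha : 0 < a) (hγ2 : 2 < γ) (hγ4 : γ < 4) (hA : 0 < A)
    (hB : 0 < B) : criticalLambda a γ A B '' Ioi 0 = Iic (Lam a γ A B) := by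
  rw [← criticalLambda_Tab ha hγ2 hγ4 hA hB]
  refine subset_antisymm ?_ fun lam hlam ↦ ?_
  · rintro _ ⟨t, ht, rfl⟩
    exact criticalLambda_le_criticalLambda_Tab ha hγ2 hγ4 hA hB ht
  obtain ⟨t₀, ht₀lam, ht₀⟩ := (((tendsto_criticalLambda_nhdsGT_zero ha hγ2 hA).eventually
    (eventually_le_atBot lam)).and self_mem_nhdsWithin).exists
  exact (continuousOn_criticalLambda hA.ne').surjOn_Icc ht₀ (Tab_pos ha hγ4 hA hB)
    ⟨ht₀lam, hlam⟩

end

theorem stmt_4_general (a γ A B lam : ℝ) (ha : 0 < a) (hγ2 : 2 < γ) (hγ4 : γ < 4)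
    (hA : 0 < A) (hB : 0 < B) :
    (∃ t : ℝ, 0 < t ∧ deriv (psi a γ A B lam) t = 0) ↔ lam ≤ Lam a γ A B := by
  rw [← mem_Iic, ← criticalLambda_image_Ioi ha hγ2 hγ4 hA hB]
  exact exists_congr fun t ↦ and_congr_right fun ht ↦
    deriv_psi_eq_zero_iff a γ A B lam (by linarith) hA.ne' ht

/-- the fiber map `ψ_λ` has at least one critical point in `(0,∞)` if and
only if `λ ≤ Λ(A,B)`. -/
theorem stmt_4 (a γ A B lam : ℝ) (ha : 0 < a) (hγ2 : 2 < γ) (hγ4 : γ < 4)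
    (hA : 0 < A) (hB : 0 < B) (hlam : 0 < lam) :
    (∃ t : ℝ, 0 < t ∧ deriv (psi a γ A B lam) t = 0) ↔ lam ≤ Lam a γ A B :=
  stmt_4_general a γ A B lam ha hγ2 hγ4 hA hB
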